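/- arXiv:1409.3511 — 6 statements merged into one kernel-verified Lean document; each statement's English description precedes it below -/
import Mathlib

section
/- If a power series ∑ a_n t^n has all coefficients real and nonnegative, and its radius of convergence R is finite and positive, then the function it defines cannot be analytically continued to a neighborhood of t = R (Pringsheim's theorem), i.e., R is a singular point. -/
/-!
Fix `0 < ρ < R` close to `R`. Differentiating the series termwise, the Taylor coefficients of the
sum at `ρ` are `(k!)⁻¹ f⁽ᵏ⁾(ρ) = ∑ₘ C(m+k, k) aₘ₊ₖ ρᵐ ≥ 0`. A holomorphic continuation `g` to a
disc around `R` is holomorphic on a disc around `ρ` of radius larger than `R - ρ`, so its Taylor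
series at `ρ`, which has these same coefficients, converges at some `ρ + s > R`. All terms of the
double series `∑ₖ ∑ₘ C(m+k, k) aₘ₊ₖ ρᵐ sᵏ` being nonnegative, it can be summed along the
antidiagonals instead, which gives the convergence of `∑ₙ aₙ (ρ + s)ⁿ`: a contradiction.
-/

open FormalMultilinearSeries Filter Topology
open scoped ENNReal

section OfScalars

variable {𝕜 : Type*} [NontriviallyNormedField 𝕜] {c : ℕ → 𝕜}

theorem ofReal_le_radius_ofScalars {R : ℝ}
    (hc : ∀ t : ℝ, 0 ≤ t → t < R → Summable fun n => ‖c n‖ * t ^ n) :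
    ENNReal.ofReal R ≤ (ofScalars 𝕜 c).radius := by
  refine ENNReal.le_of_forall_nnreal_lt fun t ht => (ofScalars 𝕜 c).le_radius_of_summable_norm ?_
  have htR : (t : ℝ) < R := by
    simpa using (ENNReal.coe_lt_ofReal).1 ht
  simpa [ofScalars_norm] using hc t t.2 htR

variable [CompleteSpace 𝕜] {f : 𝕜 → 𝕜} {x : 𝕜} {r : ℝ≥0∞}

theorem hasFPowerSeriesOnBall_tsum_ofScalars (hr : 0 < r) (hc : r ≤ (ofScalars 𝕜 c).radius) :
    HasFPowerSeriesOnBall (fun z => ∑' n, c n * z ^ n) (ofScalars 𝕜 c) 0 r := by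
  have hsum : (ofScalars 𝕜 c).sum = fun z => ∑' n, c n * z ^ n := ofScalarsSum_eq_tsum c
  exact hsum ▸ ((ofScalars 𝕜 c).hasFPowerSeriesOnBall (hr.trans_le hc)).mono hr hc

theorem HasFPowerSeriesOnBall.deriv_ofScalars (hf : HasFPowerSeriesOnBall f (ofScalars 𝕜 c) x r) :
    HasFPowerSeriesOnBall (deriv f) (ofScalars 𝕜 fun n => (n + 1 : 𝕜) * c (n + 1)) x r := by
  have h := (ContinuousLinearMap.apply 𝕜 𝕜 (1 : 𝕜)).comp_hasFPowerSeriesOnBall hf.fderiv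
  convert h using 1
  · funext z
    simp
  · ext n
    simp [nsmul_eq_mul]

theorem HasFPowerSeriesOnBall.iteratedDeriv_ofScalars
    (hf : HasFPowerSeriesOnBall f (ofScalars 𝕜 c) x r) (k : ℕ) :
    HasFPowerSeriesOnBall (iteratedDeriv k f)
      (ofScalars 𝕜 fun n => ((n + k).descFactorial k : 𝕜) * c (n + k)) x r := by
  induction k generalizing c f with
  | zero => simpa using hf
  | succ k ih =>
    rw [iteratedDeriv_succ']
    convert ih hf.deriv_ofScalars using 2
    funext n
    rw [show n + (k + 1) = n + k + 1 by ring, Nat.succ_descFactorial_succ]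
    push_cast
    ring

theorem HasFPowerSeriesOnBall.hasSum_iteratedDeriv_ofScalars [CharZero 𝕜]
    (hf : HasFPowerSeriesOnBall f (ofScalars 𝕜 c) x r) (k : ℕ) {z : 𝕜}
    (hz : z ∈ Metric.eball 0 r) :
    HasSum (fun m => ((m + k).choose k : 𝕜) * c (m + k) * z ^ m)
      ((k.factorial : 𝕜)⁻¹ * iteratedDeriv k f (x + z)) := by
  have hk : (k.factorial : 𝕜) ≠ 0 := Nat.cast_ne_zero.2 k.factorial_ne_zero
  have h := ((hf.iteratedDeriv_ofScalars k).hasSum hz).mul_left (k.factorial : 𝕜)⁻¹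
  simp only [ofScalars_apply_eq, Nat.descFactorial_eq_factorial_mul_choose, smul_eq_mul,
    Nat.cast_mul] at h
  simpa only [← mul_assoc, inv_mul_cancel_left₀ hk] using h

end OfScalars

open Finset in
theorem summable_mul_add_pow_of_summable_taylor {a : ℕ → ℝ} (ha : ∀ n, 0 ≤ a n) {x y : ℝ}
    (hx : 0 ≤ x) (hy : 0 ≤ y) {d : ℕ → ℝ}
    (hd : ∀ k, HasSum (fun m => ((m + k).choose k : ℝ) * a (m + k) * x ^ m) (d k))
    (hdy : Summable fun k => d k * y ^ k) :
    Summable fun n => a n * (x + y) ^ n := by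
  set F : ℕ × ℕ → ℝ := fun km => ((km.2 + km.1).choose km.1 : ℝ) * a (km.2 + km.1) *
    x ^ km.2 * y ^ km.1
  have hF : Summable F := by
    refine (summable_prod_of_nonneg fun km => ?_).2
      ⟨fun k => ((hd k).mul_right (y ^ k)).summable, hdy.congr fun k => ?_⟩
    · have := ha (km.2 + km.1)
      simp only [F, Pi.zero_apply]
      positivity
    · exact ((hd k).mul_right (y ^ k)).tsum_eq.symm
  refine (HasAntidiagonal.sigmaAntidiagonalEquivProd.summable_iff.2 hF).sigma.congr fun n => ?_
  change ∑' km : antidiagonal n, F km = _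
  rw [tsum_fintype (L := .unconditional _), sum_coe_sort (f := F), add_comm x,
    Commute.add_pow' (Commute.all _ _), mul_sum]
  refine sum_congr rfl fun km hkm => ?_
  rw [HasAntidiagonal.mem_antidiagonal] at hkm
  simp only [F, nsmul_eq_mul, ← hkm, add_comm km.2]
  ring

theorem summable_mul_add_pow_of_differentiableOn {a : ℕ → ℝ} (ha : ∀ n, 0 ≤ a n)
    {f g : ℂ → ℂ} {r : ℝ≥0∞} (hf : HasFPowerSeriesOnBall f (ofScalars ℂ fun n => (a n : ℂ)) 0 r)
    {ρ t : ℝ} (hρ : 0 ≤ ρ) (hρr : ENNReal.ofReal ρ < r)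
    (hg : DifferentiableOn ℂ g (Metric.ball (ρ : ℂ) t)) (hgf : g =ᶠ[𝓝 (ρ : ℂ)] f)
    {s : ℝ} (hs : 0 ≤ s) (hst : s < t) :
    Summable fun n => a n * (ρ + s) ^ n := by
  set w : ℕ → ℕ → ℝ := fun k m => ((m + k).choose k : ℝ) * a (m + k) * ρ ^ m
  have hρball : (ρ : ℂ) ∈ Metric.eball 0 r := by
    simpa [edist_dist, abs_of_nonneg hρ] using hρr
  have hw : ∀ k, HasSum (w k) (∑' m, w k m) ∧
      ((∑' m, w k m : ℝ) : ℂ) = (k.factorial : ℂ)⁻¹ * iteratedDeriv k g ρ := by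
    intro k
    have h := hf.hasSum_iteratedDeriv_ofScalars k hρball
    rw [zero_add, ← hgf.iteratedDeriv_eq k] at h
    have hwk : HasSum (fun m => (w k m : ℂ)) ((k.factorial : ℂ)⁻¹ * iteratedDeriv k g ρ) := by
      simpa [w] using h
    have hsum := Complex.summable_ofReal.1 hwk.summable
    exact ⟨hsum.hasSum, by rw [Complex.ofReal_tsum, hwk.tsum_eq]⟩
  have hρs : ((ρ + s : ℝ) : ℂ) ∈ Metric.ball (ρ : ℂ) t := by
    simpa [Complex.dist_eq, abs_of_nonneg hs] using hst
  have htaylor := Complex.hasSum_taylorSeries_on_ball hg hρs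
  have hd : Summable fun k => (∑' m, w k m) * s ^ k := by
    refine Complex.summable_ofReal.1 (htaylor.summable.congr fun k => ?_)
    rw [Complex.ofReal_mul, (hw k).2]
    push_cast
    simp only [add_sub_cancel_left, smul_eq_mul]
    ring
  exact summable_mul_add_pow_of_summable_taylor ha hρ hs (fun k => (hw k).1) hd

/-- **Pringsheim's theorem.** If a power series `∑ a_n t^n` has all coefficients real and
nonnegative, and its radius of convergence `R` is finite and positive, then the holomorphic
function it defines on the open disk of radius `R` cannot be analytically continued to a
neighbourhood of `t = R`: there is no holomorphic function on an open set containing both the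
open disk of radius `R` and the point `R` which agrees with the series on the disk. -/
theorem stmt_4 (a : ℕ → ℝ) (ha : ∀ n, 0 ≤ a n) (R : ℝ) (hR0 : 0 < R)
    (hconv : ∀ x : ℝ, 0 ≤ x → x < R → Summable fun n => a n * x ^ n)
    (hdiv : ∀ x : ℝ, R < x → ¬ Summable fun n => a n * x ^ n) :
    ¬ ∃ (U : Set ℂ) (g : ℂ → ℂ), IsOpen U ∧ Metric.ball (0 : ℂ) R ⊆ U ∧ (R : ℂ) ∈ U ∧
      DifferentiableOn ℂ g U ∧
      ∀ z ∈ Metric.ball (0 : ℂ) R, g z = ∑' n : ℕ, (a n : ℂ) * z ^ n := by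
  rintro ⟨U, g, hU, -, hRU, hg, hgf⟩
  obtain ⟨ε, hε, hεU⟩ := Metric.isOpen_iff.1 hU _ hRU
  obtain ⟨δ, hδ, hδε, hδR⟩ : ∃ δ > 0, δ ≤ ε / 3 ∧ δ ≤ R :=
    ⟨min (ε / 3) R, by positivity, min_le_left _ _, min_le_right _ _⟩
  have hf : HasFPowerSeriesOnBall (fun z => ∑' n, (a n : ℂ) * z ^ n)
      (ofScalars ℂ fun n => (a n : ℂ)) 0 (ENNReal.ofReal R) := by
    refine hasFPowerSeriesOnBall_tsum_ofScalars (by simpa) (ofReal_le_radius_ofScalars ?_)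
    simpa [abs_of_nonneg (ha _)] using hconv
  have hρ : ((R - δ : ℝ) : ℂ) ∈ Metric.ball (0 : ℂ) R := by
    rw [mem_ball_zero_iff, Complex.norm_real, Real.norm_of_nonneg (by linarith)]
    linarith
  have hgf' : g =ᶠ[𝓝 ((R - δ : ℝ) : ℂ)] fun z => ∑' n, (a n : ℂ) * z ^ n :=
    eventuallyEq_of_mem (Metric.isOpen_ball.mem_nhds hρ) hgf
  have hball : Metric.ball ((R - δ : ℝ) : ℂ) (2 * δ) ⊆ U := by
    refine (Metric.ball_subset_ball' ?_).trans hεU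
    simp only [Complex.ofReal_sub, dist_self_sub_left, Complex.norm_real, Real.norm_eq_abs,
      abs_of_pos hδ]
    linarith
  refine hdiv (R - δ + 3 / 2 * δ) (by linarith) ?_
  exact summable_mul_add_pow_of_differentiableOn ha hf (by linarith)
    ((ENNReal.ofReal_lt_ofReal_iff hR0).2 (by linarith)) (hg.mono hball) hgf' (by positivity)
    (by linarith)
end

section
/- Let Γ₁ be a directed graph with bounded cycles, S a finite set of vertices of Γ₁ such that every closed path in Γ₁ passes through S, and π : Γ₁ → Γ₂ a weak cover. Then the number of closed paths of length n in Γ₁ satisfies C(Γ₁, n) ≤ n · |S| · C(Γ₂, n). -/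
/-!
Record a closed path of `Γ₁` by a position `i` at which it visits `S`, the vertex of `S` it
visits there, and its image in `Γ₂`. Since `π` is injective on the outgoing edges of every
vertex, closed paths lift uniquely: starting from the recorded vertex, each edge of the path is
the unique lift of the corresponding image edge at the end of the previous one. So the record
determines the path, and there are at most `n · #S · C(Γ₂, n)` records.
-/

/-- A directed multigraph: vertices, edges, and source/target maps. -/
structure Digraph' where
  V : Type
  E : Type
  s : E → V
  t : E → V

/-- A map of directed multigraphs. -/
structure GraphMap (G₁ G₂ : Digraph') where
  onV : G₁.V → G₂.V
  onE : G₁.E → G₂.E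
  hs : ∀ e, G₂.s (onE e) = onV (G₁.s e)
  ht : ∀ e, G₂.t (onE e) = onV (G₁.t e)

/-- A graph map is a weak cover if it is surjective on vertices and induces a bijection
between the outgoing edges of `v` and the outgoing edges of `π(v)` for every vertex `v`. -/
def IsWeakCover {G₁ G₂ : Digraph'} (π : GraphMap G₁ G₂) : Prop :=
  Function.Surjective π.onV ∧
    ∀ v : G₁.V, Set.BijOn π.onE {e | G₁.s e = v} {e | G₂.s e = π.onV v}

/-- A closed path of length `n` in `G`: a cyclically composable sequence of `n` edges.
Its base vertex is the source of its first edge; closed paths based at different vertices,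
and distinct cyclic permutations, give distinct closed paths. -/
structure ClosedPath (G : Digraph') (n : ℕ) where
  e : Fin n → G.E
  chain : ∀ (i : ℕ) (h : i + 1 < n),
    G.t (e ⟨i, Nat.lt_of_succ_lt h⟩) = G.s (e ⟨i + 1, h⟩)
  closed : ∀ h : 0 < n, G.t (e ⟨n - 1, Nat.sub_lt h Nat.one_pos⟩) = G.s (e ⟨0, h⟩)

attribute [ext] ClosedPath

namespace ClosedPath

variable {G : Digraph'} {n : ℕ}

theorem t_eq_s_add_one [NeZero n] (γ : ClosedPath G n) (i : Fin n) :
    G.t (γ.e i) = G.s (γ.e (i + 1)) := by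
  obtain ⟨m, rfl⟩ := Nat.exists_eq_succ_of_ne_zero (NeZero.ne n)
  induction i using Fin.lastCases with
  | last =>
    rw [Fin.last_add_one]
    exact γ.closed m.succ_pos
  | cast j =>
    rw [Fin.coeSucc_eq_succ]
    exact γ.chain j (Nat.succ_lt_succ j.isLt)

end ClosedPath

def GraphMap.mapPath {G₁ G₂ : Digraph'} (π : GraphMap G₁ G₂) {n : ℕ}
    (γ : ClosedPath G₁ n) : ClosedPath G₂ n where
  e i := π.onE (γ.e i)
  chain i h := by rw [π.ht, π.hs, γ.chain i h]
  closed h := by rw [π.ht, π.hs, γ.closed h]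

open Fin.NatCast in
theorem GraphMap.eq_of_mapPath_eq {G₁ G₂ : Digraph'} {π : GraphMap G₁ G₂}
    (hinj : ∀ v, Set.InjOn π.onE {e | G₁.s e = v}) {n : ℕ} [NeZero n]
    {γ δ : ClosedPath G₁ n} (hmap : π.mapPath γ = π.mapPath δ) (i : Fin n)
    (hi : G₁.s (γ.e i) = G₁.s (δ.e i)) : γ = δ := by
  have edge_eq : ∀ j, G₁.s (γ.e j) = G₁.s (δ.e j) → γ.e j = δ.e j := fun j hs =>
    hinj _ rfl hs.symm (congrFun (congrArg ClosedPath.e hmap) j)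
  have source_eq : ∀ k : ℕ, G₁.s (γ.e (i + (k : Fin n))) = G₁.s (δ.e (i + (k : Fin n))) := by
    intro k
    induction k with
    | zero => simpa using hi
    | succ k ih =>
      rw [Nat.cast_succ, ← add_assoc, ← γ.t_eq_s_add_one, ← δ.t_eq_s_add_one,
        edge_eq _ ih]
  ext1
  funext j
  refine edge_eq j ?_
  simpa using source_eq (j - i : Fin n).val

theorem stmt_7_general {G₁ G₂ : Digraph'} (π : GraphMap G₁ G₂) (hπ : IsWeakCover π)
    (hfin₂ : ∀ m : ℕ, Finite (ClosedPath G₂ m))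
    (S : Set G₁.V) (hS : S.Finite)
    (hmeet : ∀ (m : ℕ) (γ : ClosedPath G₁ m), 0 < m → ∃ i : Fin m, G₁.s (γ.e i) ∈ S)
    (n : ℕ) (hn : 0 < n) :
    Nat.card (ClosedPath G₁ n) ≤ n * Nat.card S * Nat.card (ClosedPath G₂ n) := by
  have := NeZero.of_pos hn
  have := hfin₂ n
  have : Finite S := hS.to_subtype
  choose idx hidx using fun γ : ClosedPath G₁ n => hmeet n γ hn
  let code : ClosedPath G₁ n → Fin n × S × ClosedPath G₂ n := fun γ =>
    (idx γ, ⟨G₁.s (γ.e (idx γ)), hidx γ⟩, π.mapPath γ)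
  have code_injective : Function.Injective code := by
    intro γ δ h
    simp only [code, Prod.mk.injEq, Subtype.mk.injEq] at h
    obtain ⟨hidx_eq, hsource, hmap⟩ := h
    exact GraphMap.eq_of_mapPath_eq (fun v => (hπ.2 v).injOn) hmap (idx γ)
      (by rw [hsource, hidx_eq])
  calc Nat.card (ClosedPath G₁ n) ≤ Nat.card (Fin n × S × ClosedPath G₂ n) :=
        Nat.card_le_card_of_injective code code_injective
    _ = n * Nat.card S * Nat.card (ClosedPath G₂ n) := by
        simp [Nat.card_prod, mul_assoc]

/-- Let `π : Γ₁ → Γ₂` be a weak cover of graphs having finitely many closed paths of each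
length, and let `S` be a finite set of vertices of `Γ₁` met by every (nonempty) closed path
of `Γ₁`.  Then `C(Γ₁, n) ≤ n · #S · C(Γ₂, n)`. -/
theorem stmt_7 {G₁ G₂ : Digraph'} (π : GraphMap G₁ G₂) (hπ : IsWeakCover π)
    (hfin₁ : ∀ m : ℕ, Finite (ClosedPath G₁ m))
    (hfin₂ : ∀ m : ℕ, Finite (ClosedPath G₂ m))
    (S : Set G₁.V) (hS : S.Finite)
    (hmeet : ∀ (m : ℕ) (γ : ClosedPath G₁ m), 0 < m → ∃ i : Fin m, G₁.s (γ.e i) ∈ S)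
    (n : ℕ) (hn : 0 < n) :
    Nat.card (ClosedPath G₁ n) ≤ n * Nat.card S * Nat.card (ClosedPath G₂ n) :=
  stmt_7_general π hπ hfin₂ S hS hmeet n hn
end

section
/- In the graph associated to a labeled wedge, the support of every closed path of length n contains a vertex of the form (1, k) with 2 ≤ k ≤ n+1. -/
/-- A labeled wedge: each pair `(i, j)` with `1 ≤ i < j` is labeled separated (`true`)
or non-separated (`false`). -/
abbrev WedgeLabeling := ℕ → ℕ → Bool

/-- A vertex of the wedge `Σ = {(i,j) : 1 ≤ i < j}`. -/
def ValidVertex (p : ℕ × ℕ) : Prop := 1 ≤ p.1 ∧ p.1 < p.2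

/-- The edge relation of the graph associated to a labeled wedge: a non-separated vertex
`(i,j)` has a single (upward) edge to `(i+1, j+1)`; a separated vertex `(i,j)` has a
forward edge to `(1, j+1)` and a backward edge to `(1, i+1)`. -/
def WedgeStep (W : WedgeLabeling) (p q : ℕ × ℕ) : Prop :=
  (W p.1 p.2 = false ∧ q = (p.1 + 1, p.2 + 1)) ∨
    (W p.1 p.2 = true ∧ (q = (1, p.2 + 1) ∨ q = (1, p.1 + 1)))

/-- `c 0, c 1, …, c n = c 0` is a closed path of length `n` in the graph associated to the
labeled wedge `W`. -/
def IsClosedWedgePath (W : WedgeLabeling) (n : ℕ) (c : ℕ → ℕ × ℕ) : Prop :=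
  0 < n ∧ (∀ i ≤ n, ValidVertex (c i)) ∧ (∀ i < n, WedgeStep W (c i) (c (i + 1))) ∧ c n = c 0

/-!
Every edge raises the second coordinate by one, except a backward edge `(i, j) → (1, i + 1)`;
so a closed path must take a backward edge `c s → c (s + 1) = (1, (c s).1 + 1)`. Since every edge
raises the first coordinate by at most one, going around the cycle from `c (s + 1)` (first
coordinate `1`) to `c s` takes `n - 1` steps, whence `(c s).1 ≤ n`.
-/

namespace WedgeStep

variable {W : WedgeLabeling} {p q : ℕ × ℕ}

lemma fst_le_succ (h : WedgeStep W p q) : q.1 ≤ p.1 + 1 := by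
  rcases h with ⟨-, rfl⟩ | ⟨-, rfl | rfl⟩ <;> simp

lemma snd_eq_succ_of_ne (h : WedgeStep W p q) (hq : q ≠ (1, p.1 + 1)) : q.2 = p.2 + 1 := by
  rcases h with ⟨-, rfl⟩ | ⟨-, rfl | rfl⟩
  · rfl
  · rfl
  · exact absurd rfl hq

end WedgeStep

lemma Nat.le_add_sub_of_forall_lt_le_add_one {f : ℕ → ℕ} {n : ℕ}
    (hf : ∀ k < n, f (k + 1) ≤ f k + 1) {i j : ℕ} (hij : i ≤ j) (hjn : j ≤ n) :
    f j ≤ f i + (j - i) := by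
  induction j, hij using Nat.le_induction with
  | base => simp
  | succ j hij ih =>
    have := hf j hjn
    have := ih (by omega)
    omega

namespace IsClosedWedgePath

variable {W : WedgeLabeling} {n : ℕ} {c : ℕ → ℕ × ℕ}

lemma exists_backward_step (hc : IsClosedWedgePath W n c) :
    ∃ s < n, c (s + 1) = (1, (c s).1 + 1) := by
  obtain ⟨hn, -, hstep, hclose⟩ := hc
  by_contra! hforward
  have hsnd : ∀ k ≤ n, (c k).2 = (c 0).2 + k := by
    intro k hk
    induction k with
    | zero => rfl
    | succ k ih =>
      rw [(hstep k hk).snd_eq_succ_of_ne (hforward k hk), ih (by omega)]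
      rfl
  have := hsnd n le_rfl
  rw [hclose] at this
  omega

lemma fst_le_of_fst_succ_eq_one (hc : IsClosedWedgePath W n c) {s : ℕ} (hs : s < n)
    (h1 : (c (s + 1)).1 = 1) : (c s).1 ≤ n := by
  obtain ⟨-, -, hstep, hclose⟩ := hc
  have hfst : ∀ k < n, (c (k + 1)).1 ≤ (c k).1 + 1 := fun k hk => (hstep k hk).fst_le_succ
  have hfrom_zero :=
    Nat.le_add_sub_of_forall_lt_le_add_one (f := fun k => (c k).1) hfst (Nat.zero_le s) hs.le
  have hto_end := Nat.le_add_sub_of_forall_lt_le_add_one (f := fun k => (c k).1) hfst hs le_rfl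
  rw [hclose, h1] at hto_end
  omega

end IsClosedWedgePath

/-- In the graph associated to a labeled wedge, the support of every closed path of
length `n` contains a vertex of the form `(1, k)` with `2 ≤ k ≤ n + 1`. -/
theorem stmt_9 (W : WedgeLabeling) (n : ℕ) (c : ℕ → ℕ × ℕ)
    (hc : IsClosedWedgePath W n c) :
    ∃ i ≤ n, (c i).1 = 1 ∧ 2 ≤ (c i).2 ∧ (c i).2 ≤ n + 1 := by
  obtain ⟨s, hs, hback⟩ := hc.exists_backward_step
  have hpos : 1 ≤ (c s).1 := (hc.2.1 s hs.le).1
  have hle : (c s).1 ≤ n := hc.fst_le_of_fst_succ_eq_one hs (by rw [hback])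
  refine ⟨s + 1, hs, ?_, ?_, ?_⟩ <;> rw [hback] <;> dsimp only <;> omega
end

section
/- In the graph associated to a labeled wedge, for each k ≥ 1 there is at most one separated vertex on the diagonal D_k = {(i,j) : j − i = k} that lies on some closed path; namely if (i₀, j₀) ∈ D_k is separated with minimal height, then no vertex (i₀ + t, j₀ + t) with t ≥ 1 lies on any closed path. -/
lemma WedgeStep.eq_of_one_lt_fst {W : WedgeLabeling} {p q : ℕ × ℕ} (h : WedgeStep W p q)
    (hq : 1 < q.1) : W p.1 p.2 = false ∧ q = (p.1 + 1, p.2 + 1) := by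
  rcases h with hup | ⟨-, rfl | rfl⟩
  · exact hup
  all_goals simp at hq

namespace IsClosedWedgePath

variable {W : WedgeLabeling} {n : ℕ} {c : ℕ → ℕ × ℕ}

lemma exists_step_into (h : IsClosedWedgePath W n c) {i : ℕ} (hi : i ≤ n) :
    ∃ j ≤ n, WedgeStep W (c j) (c i) := by
  obtain ⟨hn, -, hstep, hclose⟩ := h
  rcases Nat.eq_zero_or_pos i with rfl | hpos
  · refine ⟨n - 1, Nat.sub_le _ _, ?_⟩
    simpa [Nat.sub_add_cancel hn, hclose] using hstep (n - 1) (by omega)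
  · refine ⟨i - 1, by omega, ?_⟩
    simpa [Nat.sub_add_cancel hpos] using hstep (i - 1) (by omega)

lemma exists_eq_of_eq_succ (h : IsClosedWedgePath W n c) {i a b : ℕ} (hi : i ≤ n)
    (hc : c i = (a + 1, b + 1)) (ha : 1 ≤ a) : ∃ j ≤ n, c j = (a, b) ∧ W a b = false := by
  obtain ⟨j, hj, hstep⟩ := h.exists_step_into hi
  rw [hc] at hstep
  obtain ⟨hW, heq⟩ := hstep.eq_of_one_lt_fst (Nat.succ_lt_succ ha)
  simp only [Prod.mk.injEq, Nat.add_right_cancel_iff] at heq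
  have hcj : c j = (a, b) := Prod.ext heq.1.symm heq.2.symm
  exact ⟨j, hj, hcj, by rwa [hcj] at hW⟩

lemma label_eq_false_of_eq_add (h : IsClosedWedgePath W n c) {a b s : ℕ} (ha : 1 ≤ a)
    (hs : 1 ≤ s) : ∀ i ≤ n, c i = (a + s, b + s) → W a b = false := by
  induction s, hs using Nat.le_induction with
  | base =>
    intro i hi hc
    obtain ⟨-, -, -, hW⟩ := h.exists_eq_of_eq_succ hi hc ha
    exact hW
  | succ s _ ih =>
    intro i hi hc
    rw [← add_assoc, ← add_assoc] at hc
    obtain ⟨j, hj, hcj, -⟩ := h.exists_eq_of_eq_succ hi hc (le_add_right ha)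
    exact ih j hj hcj

end IsClosedWedgePath

/-- In the graph associated to a labeled wedge, if `(i₀, j₀)` is a separated vertex, then
no vertex `(i₀ + t, j₀ + t)` with `t ≥ 1` on the same diagonal lies on any closed path.
In particular, on each diagonal `D_k = {(i,j) : j − i = k}` at most one separated vertex
(the one of minimal height) can lie on a closed path. -/
theorem stmt_11 (W : WedgeLabeling) (i₀ j₀ : ℕ) (hval : ValidVertex (i₀, j₀))
    (hsep : W i₀ j₀ = true) (t : ℕ) (ht : 1 ≤ t) :
    ∀ (n : ℕ) (c : ℕ → ℕ × ℕ), IsClosedWedgePath W n c →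
      ∀ i ≤ n, c i ≠ (i₀ + t, j₀ + t) := by
  intro n c hc i hi hci
  have := hc.label_eq_false_of_eq_add hval.1 ht i hi hci
  simp [hsep] at this
end

section
/- The number of multi-cycles of length n in the graph associated to a labeled wedge is at most (2n)^√(2n). -/
/-- A multi-cycle in the graph of a labeled wedge: a finite set `F` of vertices together
with a permutation `σ` of `F` (extended by the identity off `F`) each of whose moves is an
edge of the graph.  Its cycles are exactly finitely many simple cycles of the graph with
pairwise disjoint supports, and its length is `F.card`. -/
def IsMultiCycle (W : WedgeLabeling) (F : Finset (ℕ × ℕ)) (σ : ℕ × ℕ → ℕ × ℕ) : Prop :=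
  (∀ p ∈ F, ValidVertex p) ∧ Set.BijOn σ F F ∧ (∀ p ∈ F, WedgeStep W p (σ p)) ∧
    ∀ p ∉ F, σ p = p

/-!
Every edge into a vertex `(i, j)` with `i ≥ 2` comes from the non-separated vertex
`(i - 1, j - 1)`. Hence a multi-cycle meets each diagonal `j - i = d` in a segment
`(1, 1 + d), …, (t_d, t_d + d)` ending at the first separated vertex of that diagonal, and
it is determined by the set `D` of its diagonals and by the set `C ⊆ D` of diagonals whose top
vertex takes the backward edge. The top of `d` is sent to the bottom of the diagonal
`t_d + (if d ∈ C then 0 else d)`; this permutes `D`, and comparing `∑_D d` with the sum of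
the images gives `∑_C d = ∑_D t_d = n`. So `C` is a set of distinct positive integers with sum
`n`, hence a subset of `{1, …, n}` with `|C| ≤ √(2n)`; there are at most
`(n + 1)^√(2n) ≤ (2n)^√(2n)` of those. Finally `C` determines `D`: forward edges strictly
increase the diagonal, so every cycle of the permutation passes through `C`.
-/

open Finset

theorem Finset.card_mul_card_add_one_le_two_mul_sum {A : Finset ℕ} (hA : ∀ a ∈ A, 0 < a) :
    #A * (#A + 1) ≤ 2 * ∑ a ∈ A, a := by
  induction A using Finset.induction_on_max with
  | empty => simp
  | insert a s hlt ih =>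
    have ha : a ∉ s := fun has => lt_irrefl a (hlt a has)
    have hs : s ⊆ Ioo 0 a := fun x hx => mem_Ioo.2 ⟨hA x (mem_insert_of_mem hx), hlt x hx⟩
    have hcard : #s + 1 ≤ a := by
      have := card_le_card hs
      rw [Nat.card_Ioo] at this
      have := hA a (mem_insert_self a s)
      omega
    have := ih fun x hx => hA x (mem_insert_of_mem hx)
    rw [card_insert_of_notMem ha, sum_insert ha]
    nlinarith

theorem Finset.card_filter_powerset_card_le_le (n M : ℕ) :
    #((Icc 1 n).powerset.filter fun A => #A ≤ M) ≤ (n + 1) ^ M := by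
  have hsub : (Icc 1 n).powerset.filter (fun A => #A ≤ M) ⊆
      (range (M + 1)).biUnion fun m => (Icc 1 n).powersetCard m := by
    intro A hA
    rw [mem_filter, mem_powerset] at hA
    exact mem_biUnion.2 ⟨#A, mem_range.2 (by omega), mem_powersetCard.2 ⟨hA.1, rfl⟩⟩
  calc _ ≤ ∑ m ∈ range (M + 1), #((Icc 1 n).powersetCard m) :=
        (card_le_card hsub).trans card_biUnion_le
    _ ≤ ∑ m ∈ range (M + 1), n ^ m * 1 ^ (M - m) * M.choose m := by
        refine sum_le_sum fun m hm => ?_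
        rw [card_powersetCard, Nat.card_Icc, Nat.add_sub_cancel, one_pow, mul_one]
        exact (Nat.choose_le_pow n m).trans
          (Nat.le_mul_of_pos_right _ (Nat.choose_pos (by simpa [Nat.lt_succ_iff] using hm)))
    _ = (n + 1) ^ M := (add_pow n 1 M).symm

theorem Set.MapsTo.exists_iterate_eq_self_of_injOn {α : Type*} {f : α → α} {s : Set α}
    (hs : s.Finite) (hf : MapsTo f s s) (hinj : InjOn f s) {x : α} (hx : x ∈ s) :
    ∃ m, 0 < m ∧ f^[m] x = x := by
  have : Finite s := hs
  obtain ⟨m, hm, hper⟩ := (hf.restrict_inj.2 hinj).mem_periodicPts ⟨x, hx⟩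
  refine ⟨m, hm, ?_⟩
  have := congrArg Subtype.val hper.eq
  rwa [hf.iterate_restrict, MapsTo.val_restrict_apply] at this

/-- The row of the first separated vertex on the diagonal `j - i = d` (`0` if there is none). -/
noncomputable def topRow (W : WedgeLabeling) (d : ℕ) : ℕ :=
  sInf {k | 1 ≤ k ∧ W k (k + d) = true}

noncomputable def ladder (W : WedgeLabeling) (D : Finset ℕ) : Finset (ℕ × ℕ) :=
  D.biUnion fun d => (Icc 1 (topRow W d)).image fun k => (k, k + d)

theorem card_ladder (W : WedgeLabeling) (D : Finset ℕ) :
    #(ladder W D) = ∑ d ∈ D, topRow W d := by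
  rw [ladder, card_biUnion]
  · refine sum_congr rfl fun d _ => ?_
    rw [card_image_of_injective _ fun k k' hk => congrArg Prod.fst hk, Nat.card_Icc,
      Nat.add_sub_cancel]
  · intro d _ d' _ hne
    simp only [Function.onFun, disjoint_left, mem_image]
    rintro _ ⟨k, -, rfl⟩ ⟨k', -, hk⟩
    simp only [Prod.mk.injEq] at hk
    omega

def diagonals (F : Finset (ℕ × ℕ)) : Finset ℕ := F.image fun p => p.2 - p.1

noncomputable def backDiagonals (W : WedgeLabeling) (F : Finset (ℕ × ℕ))
    (σ : ℕ × ℕ → ℕ × ℕ) : Finset ℕ :=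
  (diagonals F).filter fun d => σ (topRow W d, topRow W d + d) = (1, topRow W d + 1)

noncomputable def nextDiag (W : WedgeLabeling) (C : Finset ℕ) (d : ℕ) : ℕ :=
  topRow W d + if d ∈ C then 0 else d

theorem backDiagonals_subset {W : WedgeLabeling} {F : Finset (ℕ × ℕ)} {σ : ℕ × ℕ → ℕ × ℕ} :
    backDiagonals W F σ ⊆ diagonals F :=
  filter_subset _ _

namespace IsMultiCycle

variable {W : WedgeLabeling} {F F' : Finset (ℕ × ℕ)} {σ σ' : ℕ × ℕ → ℕ × ℕ} {p : ℕ × ℕ}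
  {d : ℕ}

theorem valid (h : IsMultiCycle W F σ) (hp : p ∈ F) : 1 ≤ p.1 ∧ p.1 < p.2 :=
  h.1 p hp

theorem bijOn (h : IsMultiCycle W F σ) : Set.BijOn σ F F :=
  h.2.1

theorem wedgeStep (h : IsMultiCycle W F σ) (hp : p ∈ F) : WedgeStep W p (σ p) :=
  h.2.2.1 p hp

theorem eq_of_not_separated (h : IsMultiCycle W F σ) (hp : p ∈ F) (hw : W p.1 p.2 = false) :
    σ p = (p.1 + 1, p.2 + 1) := by
  rcases h.wedgeStep hp with ⟨-, hσ⟩ | ⟨hw', -⟩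
  · exact hσ
  · simp [hw] at hw'

theorem eq_or_eq_of_separated (h : IsMultiCycle W F σ) (hp : p ∈ F) (hw : W p.1 p.2 = true) :
    σ p = (1, p.2 + 1) ∨ σ p = (1, p.1 + 1) := by
  rcases h.wedgeStep hp with ⟨hw', -⟩ | ⟨-, hσ⟩
  · simp [hw] at hw'
  · exact hσ

theorem pred_mem (h : IsMultiCycle W F σ) (hp : p ∈ F) (hp2 : 2 ≤ p.1) :
    (p.1 - 1, p.2 - 1) ∈ F ∧ W (p.1 - 1) (p.2 - 1) = false := by
  obtain ⟨q, hq, rfl⟩ := h.bijOn.surjOn hp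
  rcases h.wedgeStep hq with ⟨hw, hσ⟩ | ⟨-, hσ | hσ⟩ <;> rw [hσ] at hp2 ⊢
  · simpa using ⟨hq, hw⟩
  all_goals simp at hp2

theorem mem_of_le (h : IsMultiCycle W F σ) (hp : p ∈ F) {k : ℕ} (hk : 1 ≤ k) (hkp : k ≤ p.1) :
    (k, k + (p.2 - p.1)) ∈ F ∧ (k < p.1 → W k (k + (p.2 - p.1)) = false) := by
  have hvalid := h.valid hp
  induction hkp using Nat.decreasingInduction with
  | self => simpa [Nat.add_sub_cancel' hvalid.2.le] using hp
  | of_succ k hk' ih =>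
    have hpred := h.pred_mem (ih (by omega)).1 (by omega)
    have e : k + 1 + (p.2 - p.1) - 1 = k + (p.2 - p.1) := by omega
    simp only [Nat.add_sub_cancel, e] at hpred
    exact ⟨hpred.1, fun _ => hpred.2⟩

theorem fst_le_card (h : IsMultiCycle W F σ) (hp : p ∈ F) : p.1 ≤ #F := by
  simpa using card_le_card_of_injOn (fun k => (k, k + (p.2 - p.1)))
    (fun k hk => (h.mem_of_le hp (mem_Icc.1 hk).1 (mem_Icc.1 hk).2).1)
    (fun k _ k' _ hk => congrArg Prod.fst hk)

theorem exists_separated_above (h : IsMultiCycle W F σ) (hp : p ∈ F) :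
    ∃ k, p.1 ≤ k ∧ (k, k + (p.2 - p.1)) ∈ F ∧ W k (k + (p.2 - p.1)) = true := by
  have hvalid := h.valid hp
  by_contra! hnone
  have hclimb : ∀ i, (p.1 + i, p.2 + i) ∈ F := by
    intro i
    induction i with
    | zero => exact hp
    | succ i ih =>
      have e : p.1 + i + (p.2 - p.1) = p.2 + i := by omega
      have hw := hnone (p.1 + i) (by omega)
      rw [e] at hw
      have := h.bijOn.mapsTo ih
      rwa [h.eq_of_not_separated ih (by simpa using hw ih)] at this
  have := h.fst_le_card (hclimb (#F + 1))
  omega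

theorem topRow_eq (h : IsMultiCycle W F σ) (hp : p ∈ F) (hw : W p.1 p.2 = true) :
    topRow W (p.2 - p.1) = p.1 := by
  have hvalid := h.valid hp
  have hmem : p.1 ∈ {k | 1 ≤ k ∧ W k (k + (p.2 - p.1)) = true} :=
    ⟨hvalid.1, by rwa [Nat.add_sub_cancel' hvalid.2.le]⟩
  refine le_antisymm (Nat.sInf_le hmem) (not_lt.1 fun hlt => ?_)
  obtain ⟨hpos, hsep⟩ := Nat.sInf_mem ⟨_, hmem⟩
  rw [((h.mem_of_le hp hpos hlt.le).2 hlt)] at hsep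
  exact Bool.false_ne_true hsep

theorem topRow_spec (h : IsMultiCycle W F σ) (hp : p ∈ F) :
    p.1 ≤ topRow W (p.2 - p.1) ∧
      (topRow W (p.2 - p.1), topRow W (p.2 - p.1) + (p.2 - p.1)) ∈ F ∧
      W (topRow W (p.2 - p.1)) (topRow W (p.2 - p.1) + (p.2 - p.1)) = true := by
  obtain ⟨k, hk, hkF, hkw⟩ := h.exists_separated_above hp
  have htop : topRow W (p.2 - p.1) = k := by simpa using h.topRow_eq hkF hkw
  exact htop ▸ ⟨hk, hkF, hkw⟩

theorem pos_of_mem_diagonals (h : IsMultiCycle W F σ) (hd : d ∈ diagonals F) : 0 < d := by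
  obtain ⟨p, hp, rfl⟩ := mem_image.1 hd
  have := h.valid hp
  exact Nat.sub_pos_of_lt this.2

theorem top_spec (h : IsMultiCycle W F σ) (hd : d ∈ diagonals F) :
    1 ≤ topRow W d ∧ (topRow W d, topRow W d + d) ∈ F ∧
      W (topRow W d) (topRow W d + d) = true := by
  obtain ⟨p, hp, rfl⟩ := mem_image.1 hd
  obtain ⟨hle, htop⟩ := h.topRow_spec hp
  exact ⟨(h.valid hp).1.trans hle, htop⟩

theorem eq_ladder (h : IsMultiCycle W F σ) : F = ladder W (diagonals F) := by
  ext p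
  simp only [ladder, mem_biUnion, mem_image, mem_Icc]
  constructor
  · intro hp
    have hvalid := h.valid hp
    refine ⟨p.2 - p.1, mem_image_of_mem _ hp, p.1, ⟨hvalid.1, (h.topRow_spec hp).1⟩, ?_⟩
    ext <;> simp only; omega
  · rintro ⟨d, hd, k, ⟨hk, hkt⟩, rfl⟩
    simpa using (h.mem_of_le (h.top_spec hd).2.1 hk hkt).1

theorem card_eq_sum_topRow (h : IsMultiCycle W F σ) : #F = ∑ d ∈ diagonals F, topRow W d := by
  conv_lhs => rw [h.eq_ladder]
  exact card_ladder W _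

theorem sigma_top (h : IsMultiCycle W F σ) (hd : d ∈ diagonals F) :
    σ (topRow W d, topRow W d + d) = (1, 1 + nextDiag W (backDiagonals W F σ) d) := by
  obtain ⟨-, htop, hw⟩ := h.top_spec hd
  by_cases hb : d ∈ backDiagonals W F σ
  · rw [nextDiag, if_pos hb, (mem_filter.1 hb).2]
    ext <;> simp only; omega
  · have hfwd := (h.eq_or_eq_of_separated htop hw).resolve_right fun he =>
      hb (mem_filter.2 ⟨hd, he⟩)
    rw [nextDiag, if_neg hb, hfwd]
    ext <;> simp only; omega

theorem mapsTo_nextDiag (h : IsMultiCycle W F σ) :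
    Set.MapsTo (nextDiag W (backDiagonals W F σ)) (diagonals F) (diagonals F) := by
  intro d hd
  have hmem := h.bijOn.mapsTo (h.top_spec hd).2.1
  rw [h.sigma_top hd] at hmem
  exact mem_image.2 ⟨_, hmem, by simp⟩

theorem injOn_nextDiag (h : IsMultiCycle W F σ) :
    Set.InjOn (nextDiag W (backDiagonals W F σ)) (diagonals F) := by
  intro d hd d' hd' hnext
  have htops := h.bijOn.injOn (h.top_spec hd).2.1 (h.top_spec hd').2.1
    (by rw [h.sigma_top hd, h.sigma_top hd', hnext])
  simp only [Prod.mk.injEq] at htops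
  omega

theorem sum_backDiagonals (h : IsMultiCycle W F σ) : ∑ d ∈ backDiagonals W F σ, d = #F := by
  have himage : (diagonals F).image (nextDiag W (backDiagonals W F σ)) = diagonals F :=
    eq_of_subset_of_card_le (image_subset_iff.2 h.mapsTo_nextDiag)
      (card_image_of_injOn h.injOn_nextDiag).ge
  have hperm : ∑ d ∈ diagonals F, d =
      #F + ∑ d ∈ diagonals F, if d ∈ backDiagonals W F σ then 0 else d := by
    conv_lhs => rw [← himage, sum_image h.injOn_nextDiag]
    simp only [nextDiag, sum_add_distrib, h.card_eq_sum_topRow]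
  have hsplit : ∑ d ∈ diagonals F, d = ∑ d ∈ backDiagonals W F σ, d +
      ∑ d ∈ diagonals F, if d ∈ backDiagonals W F σ then 0 else d := by
    have hback : ∑ d ∈ backDiagonals W F σ, d =
        ∑ d ∈ diagonals F, if d ∈ backDiagonals W F σ then d else 0 := by
      rw [sum_ite_mem, inter_eq_right.2 backDiagonals_subset]
    rw [hback, ← sum_add_distrib]
    exact sum_congr rfl fun d _ => by split_ifs <;> simp
  omega

theorem backDiagonals_subset_Icc (h : IsMultiCycle W F σ) : backDiagonals W F σ ⊆ Icc 1 #F :=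
  fun _ hd => mem_Icc.2 ⟨h.pos_of_mem_diagonals (backDiagonals_subset hd),
    h.sum_backDiagonals ▸ single_le_sum (f := fun d => d) (fun _ _ => Nat.zero_le _) hd⟩

theorem card_backDiagonals_le_sqrt (h : IsMultiCycle W F σ) :
    #(backDiagonals W F σ) ≤ Nat.sqrt (2 * #F) := by
  have := card_mul_card_add_one_le_two_mul_sum (A := backDiagonals W F σ) fun d hd =>
    h.pos_of_mem_diagonals (backDiagonals_subset hd)
  rw [h.sum_backDiagonals] at this
  exact Nat.le_sqrt.2 (le_trans (Nat.mul_le_mul_left _ (Nat.le_succ _)) this)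

theorem exists_iterate_eq_of_mem_diagonals (h : IsMultiCycle W F σ) (hd : d ∈ diagonals F) :
    ∃ c ∈ backDiagonals W F σ, ∃ m, (nextDiag W (backDiagonals W F σ))^[m] c = d := by
  set f := nextDiag W (backDiagonals W F σ)
  obtain ⟨m, hm, hcycle⟩ : ∃ m, 0 < m ∧ f^[m] d = d :=
    h.mapsTo_nextDiag.exists_iterate_eq_self_of_injOn (diagonals F).finite_toSet
      h.injOn_nextDiag hd
  by_contra! hnone
  have hforward : ∀ i ≤ m, f^[i] d ∉ backDiagonals W F σ := fun i hi hb =>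
    hnone _ hb (m - i) (by rw [← Function.iterate_add_apply, Nat.sub_add_cancel hi, hcycle])
  have hgrow : ∀ i ≤ m, d + i ≤ f^[i] d := by
    intro i hi
    induction i with
    | zero => simp
    | succ i ih =>
      have hmem := h.mapsTo_nextDiag.iterate i hd
      have hfwd : f (f^[i] d) = topRow W (f^[i] d) + f^[i] d := by
        simp only [f, nextDiag, if_neg (hforward i (by omega))]
      rw [Function.iterate_succ_apply', hfwd]
      have htop : 1 ≤ topRow W (f^[i] d) := (h.top_spec hmem).1
      have := ih (by omega)
      omega
  have := hgrow m le_rfl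
  omega

theorem diagonals_subset (h : IsMultiCycle W F σ) (h' : IsMultiCycle W F' σ')
    (hC : backDiagonals W F σ = backDiagonals W F' σ') : diagonals F ⊆ diagonals F' := by
  intro d hd
  obtain ⟨c, hc, m, rfl⟩ := h.exists_iterate_eq_of_mem_diagonals hd
  rw [hC] at hc ⊢
  exact h'.mapsTo_nextDiag.iterate m (backDiagonals_subset hc)

theorem eq_of_backDiagonals_eq (h : IsMultiCycle W F σ) (h' : IsMultiCycle W F' σ')
    (hC : backDiagonals W F σ = backDiagonals W F' σ') : F = F' ∧ σ = σ' := by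
  have hD : diagonals F = diagonals F' :=
    (h.diagonals_subset h' hC).antisymm (h'.diagonals_subset h hC.symm)
  have hF : F = F' := by rw [h.eq_ladder, h'.eq_ladder, hD]
  refine ⟨hF, funext fun p => ?_⟩
  by_cases hp : p ∈ F
  · have hp' : p ∈ F' := hF ▸ hp
    cases hw : W p.1 p.2 with
    | false => rw [h.eq_of_not_separated hp hw, h'.eq_of_not_separated hp' hw]
    | true =>
      have hd : p.2 - p.1 ∈ diagonals F := mem_image_of_mem _ hp
      have hptop : (topRow W (p.2 - p.1), topRow W (p.2 - p.1) + (p.2 - p.1)) = p := by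
        have := h.valid hp
        rw [h.topRow_eq hp hw]
        ext <;> simp only; omega
      rw [← hptop, h.sigma_top hd, h'.sigma_top (hD ▸ hd), hC]
  · rw [h.2.2.2 p hp, h'.2.2.2 p (hF ▸ hp)]

end IsMultiCycle

/-- The number of multi-cycles of length `n` in the graph associated to a labeled wedge
is at most `(2n)^√(2n)`. -/
theorem stmt_12 (W : WedgeLabeling) (n : ℕ) (hn : 0 < n) :
    (Nat.card {x : Finset (ℕ × ℕ) × (ℕ × ℕ → ℕ × ℕ) //
        IsMultiCycle W x.1 x.2 ∧ x.1.card = n} : ℝ) ≤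
      (2 * n : ℝ) ^ Real.sqrt (2 * n) := by
  set M := Nat.sqrt (2 * n)
  have hmem (F : Finset (ℕ × ℕ)) (σ : ℕ × ℕ → ℕ × ℕ) (h : IsMultiCycle W F σ) (hF : #F = n) :
      backDiagonals W F σ ∈ (Icc 1 n).powerset.filter (fun A => #A ≤ M) := by
    subst hF
    exact mem_filter.2 ⟨mem_powerset.2 h.backDiagonals_subset_Icc, h.card_backDiagonals_le_sqrt⟩
  let code (x : {x : Finset (ℕ × ℕ) × (ℕ × ℕ → ℕ × ℕ) // IsMultiCycle W x.1 x.2 ∧ x.1.card = n}) :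
      (Icc 1 n).powerset.filter (fun A => #A ≤ M) :=
    ⟨backDiagonals W x.1.1 x.1.2, hmem _ _ x.2.1 x.2.2⟩
  have hcode : Function.Injective code := fun x y hxy => by
    obtain ⟨hF, hσ⟩ := x.2.1.eq_of_backDiagonals_eq y.2.1 (congrArg Subtype.val hxy)
    exact Subtype.ext (Prod.ext hF hσ)
  have hcard := (Nat.card_le_card_of_injective code hcode).trans_eq (Nat.card_eq_finsetCard _)
  have hn1 : (1 : ℝ) ≤ n := by exact_mod_cast hn
  calc _ ≤ ((n + 1 : ℕ) : ℝ) ^ M := by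
        exact_mod_cast hcard.trans (card_filter_powerset_card_le_le n M)
    _ ≤ (2 * n : ℝ) ^ (M : ℝ) := by
        rw [Real.rpow_natCast]
        gcongr
        push_cast
        linarith
    _ ≤ _ := Real.rpow_le_rpow_of_exponent_le (by linarith)
        (by exact_mod_cast Real.nat_sqrt_le_real_sqrt)
end

section
/- The graph associated to any labeled wedge has bounded cycles: its outgoing degree is at most 2, and for each n it has only finitely many simple cycles of length n. -/
open Function

lemma Nat.apply_add_le_of_forall_succ_le {f : ℕ → ℕ} (hf : ∀ k, f (k + 1) ≤ f k + 1) (k : ℕ) :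
    ∀ m, f (k + m) ≤ f k + m
  | 0 => le_rfl
  | m + 1 => (hf (k + m)).trans (by have := apply_add_le_of_forall_succ_le hf k m; omega)

lemma Nat.apply_add_eq_or_le_of_succ_or_one {f : ℕ → ℕ}
    (hf : ∀ k, f (k + 1) = f k + 1 ∨ f (k + 1) = 1) (k : ℕ) :
    ∀ m, f (k + m) = f k + m ∨ f (k + m) ≤ m
  | 0 => Or.inl rfl
  | m + 1 => by
    have := apply_add_eq_or_le_of_succ_or_one hf k m
    rcases hf (k + m) with h | h <;> rw [← add_assoc, h] <;> omega

lemma Function.Periodic.le_of_succ_or_one {f : ℕ → ℕ} {n : ℕ}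
    (hf : ∀ k, f (k + 1) = f k + 1 ∨ f (k + 1) = 1) (hper : Periodic f n) (hn : 0 < n) (k : ℕ) :
    f k ≤ n := by
  have := Nat.apply_add_eq_or_le_of_succ_or_one hf k n
  rw [hper k] at this
  omega

def wedgeSuccessors (W : WedgeLabeling) (p : ℕ × ℕ) : Finset (ℕ × ℕ) :=
  if W p.1 p.2 then {(1, p.2 + 1), (1, p.1 + 1)} else {(p.1 + 1, p.2 + 1)}

lemma wedgeStep_iff_mem_wedgeSuccessors {W : WedgeLabeling} {p q : ℕ × ℕ} :
    WedgeStep W p q ↔ q ∈ wedgeSuccessors W p := by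
  unfold WedgeStep wedgeSuccessors
  cases W p.1 p.2 <;> simp

lemma card_wedgeSuccessors_le (W : WedgeLabeling) (p : ℕ × ℕ) :
    (wedgeSuccessors W p).card ≤ 2 := by
  unfold wedgeSuccessors
  split
  · exact Finset.card_le_two
  · simp

lemma nat_card_wedgeStep_le (W : WedgeLabeling) (p : ℕ × ℕ) :
    Nat.card {q : ℕ × ℕ // WedgeStep W p q} ≤ 2 := by
  simp only [wedgeStep_iff_mem_wedgeSuccessors]
  exact (Nat.card_eq_finsetCard _).trans_le (card_wedgeSuccessors_le W p)

namespace WedgeStep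

variable {W : WedgeLabeling} {p q : ℕ × ℕ}

lemma fst_eq (h : WedgeStep W p q) : q.1 = p.1 + 1 ∨ q.1 = 1 := by
  rcases h with ⟨-, rfl⟩ | ⟨-, rfl | rfl⟩ <;> simp

lemma snd_eq (h : WedgeStep W p q) : q.2 = p.2 + 1 ∨ q.2 = p.1 + 1 := by
  rcases h with ⟨-, rfl⟩ | ⟨-, rfl | rfl⟩ <;> simp

lemma snd_le (h : WedgeStep W p q) (hp : ValidVertex p) : q.2 ≤ p.2 + 1 := by
  have := hp.2
  rcases h.snd_eq with h | h <;> omega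

end WedgeStep

section PeriodicWalk

variable {W : WedgeLabeling} {d : ℕ → ℕ × ℕ} {n : ℕ}

lemma fst_le_of_periodic_walk (hstep : ∀ k, WedgeStep W (d k) (d (k + 1)))
    (hper : Periodic d n) (hn : 0 < n) (k : ℕ) : (d k).1 ≤ n :=
  Periodic.le_of_succ_or_one (f := fun k => (d k).1) (fun k => (hstep k).fst_eq)
    (fun k => congrArg Prod.fst (hper k)) hn k

lemma snd_le_of_isMin_snd_of_periodic_walk (hstep : ∀ k, WedgeStep W (d k) (d (k + 1)))
    (hper : Periodic d n) (hn : 0 < n) {k₀ : ℕ} (hmin : ∀ k, (d k₀).2 ≤ (d k).2) :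
    (d k₀).2 ≤ n + 1 := by
  have hfst := fst_le_of_periodic_walk hstep hper hn (k₀ + n - 1)
  have hprev := (hstep (k₀ + n - 1)).snd_eq
  rw [show k₀ + n - 1 + 1 = k₀ + n by omega, hper k₀] at hprev
  have := hmin (k₀ + n - 1)
  omega

lemma snd_le_of_periodic_walk (hval : ∀ k, ValidVertex (d k))
    (hstep : ∀ k, WedgeStep W (d k) (d (k + 1))) (hper : Periodic d n) (hn : 0 < n) (k : ℕ) :
    (d k).2 ≤ 2 * n := by
  obtain ⟨k₀, hmin⟩ : ∃ k₀, ∀ k, (d k₀).2 ≤ (d k).2 :=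
    ⟨_, fun k => argmin_le (fun k => (d k).2) k⟩
  obtain ⟨m, hm, hk⟩ : ∃ m < n, d k = d (k₀ + m) := by
    refine ⟨(k + k₀ * n - k₀) % n, Nat.mod_lt _ hn, ?_⟩
    rw [add_comm k₀, (hper.add_const k₀).map_mod_nat, ← hper.nat_mul k₀ k]
    have : k₀ ≤ k₀ * n := Nat.le_mul_of_pos_right k₀ hn
    rw [Nat.cast_id]
    congr 1
    omega
  have hgrowth := Nat.apply_add_le_of_forall_succ_le (f := fun k => (d k).2)
    (fun k => (hstep k).snd_le (hval k)) k₀ m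
  have := snd_le_of_isMin_snd_of_periodic_walk hstep hper hn hmin
  rw [hk]
  omega

lemma le_of_periodic_walk (hval : ∀ k, ValidVertex (d k))
    (hstep : ∀ k, WedgeStep W (d k) (d (k + 1))) (hper : Periodic d n) (hn : 0 < n) (k : ℕ) :
    d k ≤ (n, 2 * n) :=
  ⟨fst_le_of_periodic_walk hstep hper hn k, snd_le_of_periodic_walk hval hstep hper hn k⟩

end PeriodicWalk

lemma le_of_cyclic_walk {W : WedgeLabeling} {n : ℕ} {c : Fin n → ℕ × ℕ}
    (hval : ∀ i, ValidVertex (c i))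
    (hstep : ∀ i : Fin n, WedgeStep W (c i) (c ⟨((i : ℕ) + 1) % n, Nat.mod_lt _ i.pos⟩))
    (i : Fin n) : c i ≤ (n, 2 * n) := by
  have hn := i.pos
  set d : ℕ → ℕ × ℕ := fun k => c ⟨k % n, Nat.mod_lt k hn⟩
  have hper : Periodic d n := fun k => by simp only [d, Nat.add_mod_right]
  have hstep' : ∀ k, WedgeStep W (d k) (d (k + 1)) := fun k => by
    simpa only [d, Nat.mod_add_mod] using hstep ⟨k % n, Nat.mod_lt k hn⟩
  simpa [d, Nat.mod_eq_of_lt i.isLt] using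
    le_of_periodic_walk (fun k => hval _) hstep' hper hn i

/-- The graph associated to any labeled wedge has bounded cycles: every vertex has
outgoing degree at most `2`, and for each `n` there are only finitely many simple cycles
of length `n` (closed paths with pairwise distinct vertices, here described by a cyclic
sequence `c : Fin n → Σ`). -/
theorem stmt_13 (W : WedgeLabeling) :
    (∀ p : ℕ × ℕ, ValidVertex p → Nat.card {q : ℕ × ℕ // WedgeStep W p q} ≤ 2) ∧
      ∀ n : ℕ, {c : Fin n → ℕ × ℕ | Function.Injective c ∧
        (∀ i, ValidVertex (c i)) ∧ ∀ i : Fin n, WedgeStep W (c i) (c ⟨((i : ℕ) + 1) % n, Nat.mod_lt _ i.pos⟩)}.Finite := by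
  refine ⟨fun p _ => nat_card_wedgeStep_le W p, fun n => ?_⟩
  exact (Set.finite_Iic fun _ => (n, 2 * n)).subset fun c ⟨_, hval, hstep⟩ => le_of_cyclic_walk hval hstep
end
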